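/- Let Q be a basket of type 1/r(a, -a, 1) with index r ≥ 26. Then l(Q, 15) > 29. -/

import Mathlib

/-- The Reid correction term `l(r, b, m) = ∑_{j=1}^{m-1} \overline{bj}(r-\overline{bj})/(2r)`,
where `\overline{bj}` is the smallest non-negative residue of `b*j` mod `r`.
(The `j = 0` term vanishes, so we may sum over `j ∈ range m`.) -/
def reidL (r b m : ℕ) : ℚ :=
  ∑ j ∈ Finset.range m,
    (((b * j) % r : ℕ) : ℚ) * ((r : ℚ) - (((b * j) % r : ℕ) : ℚ)) / (2 * r)

/-- A basket of type `1/r(a, -a, 1)`: a pair of integers `(r, a)` with `r ≥ 2`,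
`0 < a < r` and `gcd(a, r) = 1`. -/
structure Basket where
  r : ℕ
  a : ℕ
  two_le_r : 2 ≤ r
  a_pos : 0 < a
  a_lt_r : a < r
  coprime : Nat.Coprime a r

/-- The unique `b` with `0 < b < r` and `a * b ≡ 1 (mod r)`. -/
def Basket.binv (Q : Basket) : ℕ := ((Q.a : ZMod Q.r)⁻¹).val

/-- The correction term `l(Q, m)` of a basket. -/
def Basket.l (Q : Basket) (m : ℕ) : ℚ := reidL Q.r Q.binv m

/-- `Δ_n(Q) := n² l(Q,2) + l(Q,n) - l(Q,n+1)`. -/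
def Basket.delta (Q : Basket) (n : ℕ) : ℚ :=
  (n : ℚ) ^ 2 * Q.l 2 + Q.l n - Q.l (n + 1)

/-- A formal basket datum with `χ = 1`: a finite multiset of baskets together
with a positive rational number `K`. -/
structure FormalDatum where
  B : Multiset Basket
  K : ℚ
  K_pos : 0 < K

/-- The formal plurigenus `P(m) = (1/12)m(m-1)(2m-1)K - (2m-1) + ∑_{Q ∈ B} l(Q, m)`. -/
def FormalDatum.P (D : FormalDatum) (m : ℕ) : ℚ :=
  (1 / 12 : ℚ) * m * (m - 1) * (2 * m - 1) * D.K - (2 * m - 1)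
    + (D.B.map (fun Q => Q.l m)).sum


/-!
Writing `x_j` for the residue of `b j` modulo `r`, the summand `x_j (r - x_j)` is unchanged when
`x_j` is replaced by its distance `y_j = min (x_j, r - x_j) ∈ [1, r/2]` to `rℤ`. For
`j = 1, …, 13` the `y_j` are pairwise distinct, since `b` is a unit modulo `r` and `i ± j ≢ 0`
whenever `2 · 13 ≤ r`. As `y ↦ y (r - y)` increases on `[0, r/2]`, these thirteen terms alone give
`2r · l(Q, 15) ≥ ∑_{k=1}^{13} k (r - k) = 91 r - 819 > 58 r`.
-/

open Finset

theorem Finset.sum_Icc_card_le_sum_of_monotoneOn {M : Type*} [AddCommMonoid M] [PartialOrder M]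
    [IsOrderedAddMonoid M] {f : ℕ → M} {N : ℕ} (hf : MonotoneOn f (Set.Icc 1 N))
    (S : Finset ℕ) (hS : S ⊆ Icc 1 N) :
    ∑ k ∈ Icc 1 #S, f k ≤ ∑ s ∈ S, f s := by
  induction S using Finset.induction_on_max with
  | empty => simp
  | insert a S ha ih =>
    have haS : a ∉ S := fun h => (ha a h).false
    have hS' : S ⊆ Icc 1 N := (subset_insert a S).trans hS
    have haN := mem_Icc.mp (hS (mem_insert_self a S))
    have hcard : #S + 1 ≤ a := by
      have := card_le_card fun x hx =>
        mem_Icc.mpr ⟨(mem_Icc.mp (hS' hx)).1, Nat.le_sub_one_of_lt (ha x hx)⟩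
      rw [Nat.card_Icc] at this
      omega
    rw [card_insert_of_notMem haS, sum_Icc_succ_top (by omega), sum_insert haS, add_comm]
    exact add_le_add (hf ⟨by omega, by omega⟩ haN hcard) (ih hS')

theorem Nat.monotoneOn_mul_tsub (r : ℕ) :
    MonotoneOn (fun x => x * (r - x)) (Set.Iic (r / 2)) := by
  intro x hx y hy hxy
  rw [Set.mem_Iic] at hx hy
  have hyx : (0 : ℤ) ≤ y - x := by omega
  have hrxy : (0 : ℤ) ≤ r - x - y := by omega
  have : (x * (r - x) : ℤ) ≤ y * (r - y) := by nlinarith [mul_nonneg hyx hrxy]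
  zify [show x ≤ r by omega, show y ≤ r by omega]
  exact this

theorem Nat.min_mul_tsub_min {x r : ℕ} (h : x ≤ r) :
    min x (r - x) * (r - min x (r - x)) = x * (r - x) := by
  rcases le_total x (r - x) with hle | hle
  · rw [min_eq_left hle]
  · rw [min_eq_right hle, Nat.sub_sub_self h, mul_comm]

theorem Nat.mul_mod_ne_zero_of_coprime {b r j : ℕ} (hb : b.Coprime r) (hj : 0 < j)
    (hjr : j < r) : b * j % r ≠ 0 := fun h =>
  absurd (Nat.le_of_dvd hj (hb.symm.dvd_of_dvd_mul_left (Nat.dvd_of_mod_eq_zero h))) (by omega)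

section FoldedResidue

variable {b r : ℕ}

def foldedResidue (b r j : ℕ) : ℕ := min (b * j % r) (r - b * j % r)

theorem foldedResidue_mem_Icc (hb : b.Coprime r) {j : ℕ} (hj : 0 < j) (hjr : j < r) :
    foldedResidue b r j ∈ Icc 1 (r / 2) := by
  have := Nat.mul_mod_ne_zero_of_coprime hb hj hjr
  have := Nat.mod_lt (b * j) (show 0 < r by omega)
  rw [mem_Icc, foldedResidue]
  omega

theorem foldedResidue_injOn (hb : b.Coprime r) {m : ℕ} (hm : 2 * m ≤ r) :
    Set.InjOn (foldedResidue b r) (Icc 1 m) := by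
  intro i hi j hj hij
  simp only [coe_Icc, Set.mem_Icc, foldedResidue] at hi hj hij
  have hr : 0 < r := by omega
  have := Nat.mod_lt (b * i) hr
  have := Nat.mod_lt (b * j) hr
  rcases (by omega : b * i % r = b * j % r ∨ b * i % r + b * j % r = r) with h | h
  · have := Nat.ModEq.cancel_left_of_coprime hb.symm h
    rwa [Nat.ModEq, Nat.mod_eq_of_lt (by omega), Nat.mod_eq_of_lt (by omega)] at this
  · have : r ∣ b * (i + j) :=
      Nat.dvd_of_mod_eq_zero (by rw [Nat.mul_add, Nat.add_mod, h, Nat.mod_self])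
    have := Nat.le_of_dvd (by omega) (hb.symm.dvd_of_dvd_mul_left this)
    omega

theorem sum_Icc_mul_tsub_le_sum_mul_mod (hb : b.Coprime r) {m : ℕ} (hm : 2 * m ≤ r) :
    ∑ k ∈ Icc 1 m, k * (r - k) ≤ ∑ j ∈ Icc 1 m, b * j % r * (r - b * j % r) := by
  have hfold : ∀ j ∈ Icc 1 m, b * j % r * (r - b * j % r) =
      foldedResidue b r j * (r - foldedResidue b r j) := fun j hj =>
    (Nat.min_mul_tsub_min (Nat.mod_lt _ (by rw [mem_Icc] at hj; omega)).le).symm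
  have hS : (Icc 1 m).image (foldedResidue b r) ⊆ Icc 1 (r / 2) := by
    intro s hs
    obtain ⟨j, hj, rfl⟩ := mem_image.mp hs
    rw [mem_Icc] at hj
    exact foldedResidue_mem_Icc hb (by omega) (by omega)
  calc ∑ k ∈ Icc 1 m, k * (r - k)
      = ∑ k ∈ Icc 1 #((Icc 1 m).image (foldedResidue b r)), k * (r - k) := by
        rw [Finset.card_image_of_injOn (foldedResidue_injOn hb hm), Nat.card_Icc,
          Nat.add_sub_cancel]
    _ ≤ ∑ s ∈ (Icc 1 m).image (foldedResidue b r), s * (r - s) :=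
        sum_Icc_card_le_sum_of_monotoneOn
          ((Nat.monotoneOn_mul_tsub r).mono Set.Icc_subset_Iic_self) _ hS
    _ = ∑ j ∈ Icc 1 m, b * j % r * (r - b * j % r) := by
        rw [sum_image (foldedResidue_injOn hb hm), sum_congr rfl hfold]

end FoldedResidue

theorem reidL_eq_natCast_sum_div {r : ℕ} (hr : 0 < r) (b m : ℕ) :
    reidL r b m = ((∑ j ∈ range m, b * j % r * (r - b * j % r) : ℕ) : ℚ) / (2 * r) := by
  rw [reidL, Nat.cast_sum, sum_div]
  refine sum_congr rfl fun j _ => ?_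
  rw [Nat.cast_mul, Nat.cast_sub (Nat.mod_lt _ hr).le]

theorem Basket.binv_coprime (Q : Basket) : Q.binv.Coprime Q.r := by
  rw [Basket.binv, ← ZMod.coe_unitOfCoprime Q.a Q.coprime, ZMod.inv_coe_unit]
  exact ZMod.val_coe_unit_coprime _

/-- For a basket `Q` of index `r ≥ 26`, `l(Q, 15) > 29`. -/
theorem basket_l_fifteen_gt (Q : Basket) (h : 26 ≤ Q.r) : 29 < Q.l 15 := by
  have hr : 0 < Q.r := by omega
  have hsum : 58 * Q.r < ∑ j ∈ range 15, Q.binv * j % Q.r * (Q.r - Q.binv * j % Q.r) :=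
    calc 58 * Q.r < ∑ k ∈ Icc 1 13, k * (Q.r - k) := by
          simp only [Nat.reduceAdd, Nat.one_le_ofNat, sum_Icc_succ_top, Icc_self, sum_singleton,
            one_mul]
          omega
      _ ≤ ∑ j ∈ Icc 1 13, Q.binv * j % Q.r * (Q.r - Q.binv * j % Q.r) :=
          sum_Icc_mul_tsub_le_sum_mul_mod Q.binv_coprime (by omega)
      _ ≤ _ := sum_le_sum_of_subset fun j hj => mem_range.mpr (by rw [mem_Icc] at hj; omega)
  rw [Basket.l, reidL_eq_natCast_sum_div hr, lt_div_iff₀ (by positivity)]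
  exact_mod_cast (by omega : 29 * (2 * Q.r) < _)
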